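/- arXiv:math/0605215 — 3 statements merged into one kernel-verified Lean document; each statement's English description precedes it below -/
import Mathlib

section
/- Define on the vector space S of stable locally-L² sections (functions f : (0,∞) → H, Borel, locally L², with f(λ+1) = U f(λ) a.e. for λ large, where U is a fixed isometry on H) the sesquilinear form ⟨f,g⟩ = lim_{n→∞} ∫_n^{n+1} ⟨f(λ), g(λ)⟩ dλ. Then this form is well-defined (the limit exists) and positive semidefinite: ⟨f,f⟩ ≥ 0 for all f ∈ S. -/
/-!
On `[λ₀, ∞)` the stability relation `f(λ+1) = U f(λ)` and the fact that `U` preserves inner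
products make `λ ↦ ⟪f(λ), g(λ)⟫` almost everywhere `1`-periodic, so by translation invariance of
Lebesgue measure the integrals over `(n, n+1]` do not depend on `n ≥ λ₀`: the sequence is
eventually constant. For `g = f` the common value is the integral of `‖f‖²`, which is nonnegative.
-/

open MeasureTheory Set Filter

/-- A stable section: Borel measurable, locally square-integrable, and eventually
satisfying `f(λ+1) = U f(λ)` almost everywhere. -/
def Stable {H : Type*} [NormedAddCommGroup H] [InnerProductSpace ℂ H]
    [MeasurableSpace H] [BorelSpace H] (U : H →ₗᵢ[ℂ] H) (f : ℝ → H) : Prop :=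
  Measurable f ∧
  (∀ T : ℝ, 0 < T → IntegrableOn (fun lam => ‖f lam‖ ^ 2) (Ioc 0 T)) ∧
  ∃ l0 : ℝ, 0 < l0 ∧ ∀ᵐ lam : ℝ, l0 ≤ lam → f (lam + 1) = U (f lam)

open Topology

section EventuallyPeriodic

variable {E : Type*} [NormedAddCommGroup E] [NormedSpace ℝ E] {φ : ℝ → E} {l₀ : ℝ}

lemma setIntegral_Ioc_add_one_eq_of_ae_periodic (hφ : ∀ᵐ x, l₀ ≤ x → φ (x + 1) = φ x)
    {a : ℝ} (ha : l₀ ≤ a) :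
    ∫ x in Ioc (a + 1) (a + 1 + 1), φ x = ∫ x in Ioc a (a + 1), φ x := by
  rw [← intervalIntegral.integral_of_le (by linarith), ← intervalIntegral.integral_of_le
    (by linarith), ← intervalIntegral.integral_comp_add_right φ 1]
  refine intervalIntegral.integral_congr_ae ?_
  filter_upwards [hφ] with x hx hmem
  rw [uIoc_of_le (by linarith)] at hmem
  exact hx (ha.trans hmem.1.le)

lemma tendsto_setIntegral_Ioc_of_ae_periodic (hφ : ∀ᵐ x, l₀ ≤ x → φ (x + 1) = φ x) :
    Tendsto (fun n : ℕ => ∫ x in Ioc (n : ℝ) (n + 1), φ x) atTop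
      (𝓝 (∫ x in Ioc (⌈l₀⌉₊ : ℝ) (⌈l₀⌉₊ + 1), φ x)) := by
  refine tendsto_atTop_of_eventually_const (i₀ := ⌈l₀⌉₊) fun n hn => ?_
  induction n, hn using Nat.le_induction with
  | base => rfl
  | succ m hm ih =>
    push_cast
    rw [setIntegral_Ioc_add_one_eq_of_ae_periodic hφ
      ((Nat.le_ceil l₀).trans (by exact_mod_cast hm)), ih]

end EventuallyPeriodic

section Stable

variable {H : Type*} [NormedAddCommGroup H] [InnerProductSpace ℂ H]
  [MeasurableSpace H] [BorelSpace H] {U : H →ₗᵢ[ℂ] H} {f g : ℝ → H}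

lemma Stable.ae_periodic_inner (hf : Stable U f) (hg : Stable U g) :
    ∃ l₀ : ℝ, ∀ᵐ x, l₀ ≤ x → inner ℂ (f (x + 1)) (g (x + 1)) = inner ℂ (f x) (g x) := by
  obtain ⟨lf, -, hUf⟩ := hf.2.2
  obtain ⟨lg, -, hUg⟩ := hg.2.2
  refine ⟨max lf lg, ?_⟩
  filter_upwards [hUf, hUg] with x hxf hxg hx
  rw [hxf (le_of_max_le_left hx), hxg (le_of_max_le_right hx), LinearIsometry.inner_map_map]

lemma Stable.ae_periodic_norm_sq (hf : Stable U f) :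
    ∃ l₀ : ℝ, ∀ᵐ x, l₀ ≤ x → ‖f (x + 1)‖ ^ 2 = ‖f x‖ ^ 2 := by
  obtain ⟨l₀, -, hUf⟩ := hf.2.2
  refine ⟨l₀, ?_⟩
  filter_upwards [hUf] with x hx hl₀
  rw [hx hl₀, LinearIsometry.norm_map]

end Stable

lemma setIntegral_inner_self_eq_ofReal {H : Type*} [NormedAddCommGroup H]
    [InnerProductSpace ℂ H] (f : ℝ → H) (s : Set ℝ) :
    ∫ x in s, (inner ℂ (f x) (f x) : ℂ) = ((∫ x in s, ‖f x‖ ^ 2 : ℝ) : ℂ) := by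
  simp_rw [inner_self_eq_norm_sq_to_K, ← RCLike.ofReal_pow]
  exact integral_ofReal

/-- On the space of stable sections, the sesquilinear form
`⟨f,g⟩ = lim_{n→∞} ∫_n^{n+1} ⟪f(λ), g(λ)⟫ dλ` is well defined (the limit exists),
and it is positive semidefinite: `⟨f,f⟩` is a nonnegative real number. -/
theorem stmt4 {H : Type*} [NormedAddCommGroup H] [InnerProductSpace ℂ H]
    [MeasurableSpace H] [BorelSpace H] (U : H →ₗᵢ[ℂ] H) :
    (∀ f g : ℝ → H, Stable U f → Stable U g →
      ∃ c : ℂ, Tendsto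
        (fun n : ℕ => ∫ lam in Ioc (n : ℝ) (n + 1), (inner ℂ (f lam) (g lam) : ℂ))
        atTop (nhds c)) ∧
    (∀ f : ℝ → H, Stable U f →
      ∃ r : ℝ, 0 ≤ r ∧ Tendsto
        (fun n : ℕ => ∫ lam in Ioc (n : ℝ) (n + 1), (inner ℂ (f lam) (f lam) : ℂ))
        atTop (nhds (r : ℂ))) := by
  refine ⟨fun f g hf hg => ?_, fun f hf => ?_⟩
  · obtain ⟨l₀, hφ⟩ := hf.ae_periodic_inner hg
    exact ⟨_, tendsto_setIntegral_Ioc_of_ae_periodic hφ⟩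
  · obtain ⟨l₀, hφ⟩ := hf.ae_periodic_norm_sq
    refine ⟨∫ x in Ioc (⌈l₀⌉₊ : ℝ) (⌈l₀⌉₊ + 1), ‖f x‖ ^ 2,
      setIntegral_nonneg measurableSet_Ioc fun x _ => sq_nonneg ‖f x‖, ?_⟩
    simp_rw [setIntegral_inner_self_eq_ofReal]
    exact (Complex.continuous_ofReal.tendsto _).comp (tendsto_setIntegral_Ioc_of_ae_periodic hφ)
end

section
/- The translation-and-multiplication operator φ₀ (defined by (φ₀ f)(λ) = W f(λ−t) for λ > t, 0 for λ ≤ t, with W an isometry commuting with U) induces a well-defined isometric linear operator on the quotient pre-Hilbert space S/N of stable sections modulo eventually-null sections. -/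
/-!
`φ₀` is a shift by `t` followed by the pointwise isometry `W`, which commutes with `U`; hence it
preserves measurability, local square integrability, the relation `f (λ + 1) = U (f λ)` (with the
threshold moved by `t`) and eventual nullity. For the form: `‖f‖²` is eventually `1`-periodic, so
its integral over a unit window `(s, s + 1]` is constant for large `s`, and the windows of
`‖φ₀ f‖²` are those of `‖f‖²` shifted by `t`. Both sequences of window integrals are therefore
eventually equal to the same constant.
-/

open MeasureTheory Set Filter

/-- Eventually null. -/
def EvNull {H : Type*} [NormedAddCommGroup H] (f : ℝ → H) : Prop :=
  ∃ l0 : ℝ, 0 < l0 ∧ ∀ᵐ lam : ℝ, l0 ≤ lam → f lam = 0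

/-- The translation-and-multiplication operator `φ₀`. -/
noncomputable def phi0 {H : Type*} [NormedAddCommGroup H] [InnerProductSpace ℂ H]
    (W : H →L[ℂ] H) (t : ℝ) (f : ℝ → H) : ℝ → H :=
  fun lam => if t < lam then W (f (lam - t)) else 0

lemma intervalIntegral_add_one_eq_of_ae_periodic {E : Type*} [NormedAddCommGroup E]
    [NormedSpace ℝ E] {g : ℝ → E} {l0 s : ℝ} (hg : IntervalIntegrable g volume l0 (s + 1))
    (hper : ∀ᵐ x, l0 ≤ x → g (x + 1) = g x) (hs : l0 ≤ s) :
    ∫ x in s..s + 1, g x = ∫ x in l0..l0 + 1, g x := by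
  have hsub : ∀ a b : ℝ, a ∈ Icc l0 (s + 1) → b ∈ Icc l0 (s + 1) →
      IntervalIntegrable g volume a b := fun a b ha hb =>
    hg.mono_set (uIcc_subset_uIcc (by rwa [uIcc_of_le (by linarith)])
      (by rwa [uIcc_of_le (by linarith)]))
  have hshift : ∫ x in l0 + 1..s + 1, g x = ∫ x in l0..s, g x := by
    rw [← intervalIntegral.integral_comp_add_right]
    refine intervalIntegral.integral_congr_ae ?_
    filter_upwards [hper] with x hx hxI
    rw [uIoc_of_le hs] at hxI
    exact hx hxI.1.le
  have hsplit : (∫ x in l0..l0 + 1, g x) + ∫ x in l0 + 1..s + 1, g x =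
      (∫ x in l0..s, g x) + ∫ x in s..s + 1, g x := by
    rw [intervalIntegral.integral_add_adjacent_intervals
        (hsub l0 (l0 + 1) ⟨le_rfl, by linarith⟩ ⟨by linarith, by linarith⟩)
        (hsub (l0 + 1) (s + 1) ⟨by linarith, by linarith⟩ ⟨by linarith, le_rfl⟩),
      intervalIntegral.integral_add_adjacent_intervals
        (hsub l0 s ⟨le_rfl, by linarith⟩ ⟨hs, by linarith⟩)
        (hsub s (s + 1) ⟨hs, by linarith⟩ ⟨by linarith, le_rfl⟩)]
  rw [hshift] at hsplit
  exact (add_left_cancel ((add_comm _ _).symm.trans hsplit)).symm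

lemma integral_inner_self_eq_ofReal {α 𝕜 E : Type*} [MeasurableSpace α] {μ : Measure α}
    [RCLike 𝕜] [NormedAddCommGroup E] [InnerProductSpace 𝕜 E] (g : α → E) :
    ∫ x, (inner 𝕜 (g x) (g x) : 𝕜) ∂μ = ((∫ x, ‖g x‖ ^ 2 ∂μ : ℝ) : 𝕜) := by
  simp_rw [inner_self_eq_norm_sq_to_K, ← RCLike.ofReal_pow]
  exact integral_ofReal

section Phi0

variable {H : Type*} [NormedAddCommGroup H] [InnerProductSpace ℂ H] {W : H →L[ℂ] H} {t : ℝ}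

lemma phi0_apply_of_lt (f : ℝ → H) {lam : ℝ} (h : t < lam) : phi0 W t f lam = W (f (lam - t)) :=
  if_pos h

lemma phi0_add (f g : ℝ → H) : phi0 W t (f + g) = phi0 W t f + phi0 W t g := by
  funext lam
  by_cases h : t < lam <;> simp [phi0, h]

lemma phi0_smul (a : ℂ) (f : ℝ → H) : phi0 W t (a • f) = a • phi0 W t f := by
  funext lam
  by_cases h : t < lam <;> simp [phi0, h]

lemma norm_phi0_sq (hW : ∀ x : H, ‖W x‖ = ‖x‖) (f : ℝ → H) (lam : ℝ) :
    ‖phi0 W t f lam‖ ^ 2 = (Ioi t).indicator (fun x => ‖f (x - t)‖ ^ 2) lam := by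
  by_cases h : t < lam
  · simp [phi0, h, hW]
  · simp [phi0, h]

lemma integrableOn_norm_phi0_sq (hW : ∀ x : H, ‖W x‖ = ‖x‖) (ht : 0 ≤ t) {f : ℝ → H}
    (hf : ∀ T : ℝ, 0 < T → IntegrableOn (fun x => ‖f x‖ ^ 2) (Ioc 0 T)) {T : ℝ} (hT : 0 < T) :
    IntegrableOn (fun x => ‖phi0 W t f x‖ ^ 2) (Ioc 0 T) := by
  have hshift : IntegrableOn (fun x => ‖f (x - t)‖ ^ 2) (Ioc t (T + t)) := by
    have := ((intervalIntegrable_iff_integrableOn_Ioc_of_le hT.le).2 (hf T hT)).comp_sub_right t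
    rwa [zero_add, intervalIntegrable_iff_integrableOn_Ioc_of_le (by linarith)] at this
  simp_rw [norm_phi0_sq hW f]
  rw [integrableOn_indicator_iff measurableSet_Ioi]
  exact hshift.mono_set fun x hx => ⟨hx.1, by linarith [hx.2.2]⟩

lemma ae_phi0_add_one_eq {U : H →ₗᵢ[ℂ] H} (hcomm : ∀ x : H, W (U x) = U (W x)) {f : ℝ → H}
    {l0 : ℝ} (hl0 : 0 < l0) (hf : ∀ᵐ lam : ℝ, l0 ≤ lam → f (lam + 1) = U (f lam)) :
    ∀ᵐ lam : ℝ, l0 + t ≤ lam → phi0 W t f (lam + 1) = U (phi0 W t f lam) := by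
  filter_upwards [(measurePreserving_sub_right volume t).quasiMeasurePreserving.ae hf]
    with lam hlam hge
  rw [phi0_apply_of_lt f (by linarith), phi0_apply_of_lt f (by linarith),
    show lam + 1 - t = lam - t + 1 by ring, hlam (by linarith), hcomm]

lemma EvNull.phi0 (ht : 0 ≤ t) {f : ℝ → H} (hf : EvNull f) : EvNull (phi0 W t f) := by
  obtain ⟨l0, hl0, hnull⟩ := hf
  refine ⟨l0 + t, by linarith, ?_⟩
  filter_upwards [(measurePreserving_sub_right volume t).quasiMeasurePreserving.ae hnull]
    with lam hlam hge
  rw [phi0_apply_of_lt f (by linarith), hlam (by linarith), map_zero]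

lemma setIntegral_Ioc_norm_phi0_sq (hW : ∀ x : H, ‖W x‖ = ‖x‖) (f : ℝ → H) {s : ℝ}
    (hs : t ≤ s) :
    ∫ x in Ioc s (s + 1), ‖phi0 W t f x‖ ^ 2 = ∫ x in Ioc (s - t) (s - t + 1), ‖f x‖ ^ 2 := by
  calc ∫ x in Ioc s (s + 1), ‖phi0 W t f x‖ ^ 2
      = ∫ x in Ioc s (s + 1), ‖f (x - t)‖ ^ 2 :=
        setIntegral_congr_fun measurableSet_Ioc fun x hx => by
          rw [phi0_apply_of_lt f (hs.trans_lt hx.1), hW]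
    _ = ∫ x in Ioc (s - t) (s - t + 1), ‖f x‖ ^ 2 := by
        rw [← intervalIntegral.integral_of_le (by linarith),
          ← intervalIntegral.integral_of_le (by linarith),
          intervalIntegral.integral_comp_sub_right (fun x => ‖f x‖ ^ 2), sub_add_eq_add_sub]

lemma eventually_setIntegral_Ioc_norm_phi0_sq_eq (hW : ∀ x : H, ‖W x‖ = ‖x‖) {f : ℝ → H} {c : ℝ}
    (hc : ∀ᶠ s in atTop, ∫ x in Ioc s (s + 1), ‖f x‖ ^ 2 = c) :
    ∀ᶠ s in atTop, ∫ x in Ioc s (s + 1), ‖phi0 W t f x‖ ^ 2 = c := by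
  filter_upwards [eventually_ge_atTop t,
    (tendsto_atTop_add_const_right atTop (-t) tendsto_id).eventually hc] with s hs hcs
  rw [setIntegral_Ioc_norm_phi0_sq hW f hs, ← hcs, sub_eq_add_neg, id]

lemma eventuallyEq_setIntegral_Ioc_natCast_inner_self {g : ℝ → H} {c : ℝ}
    (hc : ∀ᶠ s in atTop, ∫ x in Ioc s (s + 1), ‖g x‖ ^ 2 = c) :
    (fun n : ℕ => ∫ x in Ioc (n : ℝ) (n + 1), (inner ℂ (g x) (g x) : ℂ)) =ᶠ[atTop]
      fun _ => (c : ℂ) := by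
  filter_upwards [tendsto_natCast_atTop_atTop.eventually hc] with n hn
  rw [integral_inner_self_eq_ofReal, hn]
  rfl

variable [MeasurableSpace H] [BorelSpace H] {U : H →ₗᵢ[ℂ] H}

lemma Stable.phi0 (hW : ∀ x : H, ‖W x‖ = ‖x‖) (hcomm : ∀ x : H, W (U x) = U (W x))
    (ht : 0 ≤ t) {f : ℝ → H} (hf : Stable U f) : Stable U (phi0 W t f) := by
  obtain ⟨hmeas, hint, l0, hl0, hper⟩ := hf
  refine ⟨?_, fun T hT => integrableOn_norm_phi0_sq hW ht hint hT,
    l0 + t, by linarith, ae_phi0_add_one_eq hcomm hl0 hper⟩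
  exact Measurable.ite measurableSet_Ioi
    (W.continuous.measurable.comp (hmeas.comp (measurable_id.sub_const t))) measurable_const

lemma Stable.eventually_setIntegral_Ioc_norm_sq_eq {f : ℝ → H} (hf : Stable U f) :
    ∃ c : ℝ, ∀ᶠ s in atTop, ∫ x in Ioc s (s + 1), ‖f x‖ ^ 2 = c := by
  obtain ⟨-, hint, l0, hl0, hper⟩ := hf
  refine ⟨∫ x in l0..l0 + 1, ‖f x‖ ^ 2, ?_⟩
  filter_upwards [eventually_ge_atTop l0] with s hs
  rw [← intervalIntegral.integral_of_le (by linarith)]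
  refine intervalIntegral_add_one_eq_of_ae_periodic ?_ ?_ hs
  · rw [intervalIntegrable_iff_integrableOn_Ioc_of_le (by linarith)]
    exact (hint (s + 1) (by linarith)).mono_set (Ioc_subset_Ioc_left hl0.le)
  · filter_upwards [hper] with x hx hxl
    rw [hx hxl, LinearIsometry.norm_map]

end Phi0

/-- With `W` an isometry commuting with `U`, the operator `φ₀` induces a
well-defined isometric linear operator on the quotient pre-Hilbert space `S/N`: it maps
stable sections to stable sections, eventually-null sections to eventually-null
sections, is linear, and preserves the limit form `⟨f,f⟩`. -/
theorem stmt13 {H : Type*} [NormedAddCommGroup H] [InnerProductSpace ℂ H]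
    [MeasurableSpace H] [BorelSpace H] (U : H →ₗᵢ[ℂ] H)
    (W : H →L[ℂ] H) (hW : ∀ x : H, ‖W x‖ = ‖x‖)
    (hcomm : ∀ x : H, W (U x) = U (W x)) (t : ℝ) (ht : 0 < t) :
    (∀ f : ℝ → H, Stable U f → Stable U (phi0 W t f)) ∧
    (∀ f : ℝ → H, Stable U f → EvNull f → EvNull (phi0 W t f)) ∧
    (∀ f g : ℝ → H, phi0 W t (f + g) = phi0 W t f + phi0 W t g) ∧
    (∀ (a : ℂ) (f : ℝ → H), phi0 W t (a • f) = a • phi0 W t f) ∧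
    (∀ (f : ℝ → H), Stable U f → ∀ r : ℂ,
      Tendsto (fun n : ℕ => ∫ lam in Ioc (n : ℝ) (n + 1),
        (inner ℂ (f lam) (f lam) : ℂ)) atTop (nhds r) →
      Tendsto (fun n : ℕ => ∫ lam in Ioc (n : ℝ) (n + 1),
        (inner ℂ (phi0 W t f lam) (phi0 W t f lam) : ℂ)) atTop (nhds r)) := by
  refine ⟨fun f hf => hf.phi0 hW hcomm ht.le, fun f _ hf => hf.phi0 ht.le, phi0_add, phi0_smul,
    fun f hf r hr => ?_⟩
  obtain ⟨c, hc⟩ := hf.eventually_setIntegral_Ioc_norm_sq_eq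
  have hf_win := eventuallyEq_setIntegral_Ioc_natCast_inner_self hc
  have hphi_win := eventuallyEq_setIntegral_Ioc_natCast_inner_self
    (eventually_setIntegral_Ioc_norm_phi0_sq_eq (t := t) hW hc)
  rw [tendsto_nhds_unique hr (tendsto_const_nhds.congr' hf_win.symm)]
  exact tendsto_const_nhds.congr' hphi_win.symm
end

section
/- Every f ∈ L²((0,1]; H) extends to a stable section f̃ by f̃(λ) = Uⁿ f(λ−n) for n < λ ≤ n+1 (n = 0,1,2,…), and the map f ↦ f̃ + N is a linear isometry from L²((0,1]; H) into the quotient inner product space S/N; in particular, if H ≠ 0 then S/N ≠ 0. -/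
open MeasureTheory Set Filter

/-- The periodic extension `f̃` of `f ∈ L²((0,1]; H)`: `f̃(λ) = Uⁿ f(λ−n)` for
`n < λ ≤ n+1`, `n = 0, 1, 2, …` (and `0` for `λ ≤ 0`). -/
noncomputable def ext {H : Type*} [NormedAddCommGroup H] [InnerProductSpace ℂ H]
    (U : H →ₗᵢ[ℂ] H) (f : ℝ → H) : ℝ → H :=
  fun lam => if 0 < lam then
    (⇑U)^[(⌈lam⌉ - 1).toNat] (f (lam - ((⌈lam⌉ : ℝ) - 1))) else 0

/-!
On each unit interval `(n, n+1]` the extension `f̃` is the translate of `f` composed with the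
isometry `Uⁿ`. Since `Uⁿ` preserves inner products and Lebesgue measure is translation invariant,
`∫_n^{n+1} ⟨f̃, g̃⟩ = ∫_0^1 ⟨f, g⟩` for every `n`: the sequence defining the inner product of `S/N`
is constant. For the same reason `f̃` vanishes a.e. on `(n, n+1]` iff `f` vanishes a.e. on `(0, 1]`,
so `f̃ ∈ N` only for `f = 0` in `L²`, and a nonzero constant `f` gives a nonzero class in `S/N`.
-/

section Translation

variable {E : Type*} [NormedAddCommGroup E]

theorem MeasureTheory.IntegrableOn.comp_sub_right_Ioc {g : ℝ → E} {a b : ℝ}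
    (hg : IntegrableOn g (Ioc a b)) (c : ℝ) :
    IntegrableOn (fun x => g (x - c)) (Ioc (a + c) (b + c)) := by
  rw [← preimage_sub_const_Ioc]
  exact ((measurePreserving_sub_right volume c).integrableOn_comp_preimage
    (measurableEmbedding_subRight c)).2 hg

theorem setIntegral_Ioc_comp_sub_right [NormedSpace ℝ E] (g : ℝ → E) (a b c : ℝ) :
    ∫ x in Ioc (a + c) (b + c), g (x - c) = ∫ x in Ioc a b, g x := by
  rw [← preimage_sub_const_Ioc]
  exact (measurePreserving_sub_right volume c).setIntegral_preimage_emb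
    (measurableEmbedding_subRight c) g _

end Translation

theorem exists_nat_mem_Ioc {x : ℝ} (hx : 0 < x) : ∃ n : ℕ, x ∈ Ioc (n : ℝ) (n + 1) := by
  refine ⟨⌈x⌉₊ - 1, ?_, ?_⟩
  all_goals
    rw [Nat.cast_sub (Nat.one_le_iff_ne_zero.2 (Nat.ceil_pos.2 hx).ne'), Nat.cast_one]
  · linarith [Nat.ceil_lt_add_one hx.le]
  · linarith [Nat.le_ceil x]

section Extension

variable {H : Type*} [NormedAddCommGroup H] [InnerProductSpace ℂ H] (U : H →ₗᵢ[ℂ] H)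

theorem ext_of_mem_Ioc (f : ℝ → H) {n : ℕ} {x : ℝ} (hx : x ∈ Ioc (n : ℝ) (n + 1)) :
    ext U f x = (U ^ n) (f (x - n)) := by
  have hceil : ⌈x⌉ = n + 1 := by
    rw [Int.ceil_eq_iff]
    push_cast
    constructor <;> linarith [hx.1, hx.2]
  simp only [_root_.ext, if_pos ((Nat.cast_nonneg n).trans_lt hx.1), hceil,
    LinearIsometry.coe_pow]
  norm_num

theorem ext_add_one (f : ℝ → H) {x : ℝ} (hx : 0 < x) : ext U f (x + 1) = U (ext U f x) := by
  obtain ⟨n, hn⟩ := exists_nat_mem_Ioc hx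
  have hn' : x + 1 ∈ Ioc ((n + 1 : ℕ) : ℝ) ((n + 1 : ℕ) + 1) := by
    push_cast
    exact ⟨by linarith [hn.1], by linarith [hn.2]⟩
  rw [ext_of_mem_Ioc U f hn', ext_of_mem_Ioc U f hn, LinearIsometry.coe_pow,
    LinearIsometry.coe_pow, Function.iterate_succ_apply', Nat.cast_succ, add_sub_add_right_eq_sub]

theorem ext_add (f g : ℝ → H) : ext U (f + g) = ext U f + ext U g := by
  funext x
  by_cases hx : 0 < x
  · simp only [_root_.ext, if_pos hx, Pi.add_apply, ← LinearIsometry.coe_pow, map_add]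
  · simp only [_root_.ext, if_neg hx, Pi.add_apply, add_zero]

theorem ext_smul (a : ℂ) (f : ℝ → H) : ext U (a • f) = a • ext U f := by
  funext x
  by_cases hx : 0 < x
  · simp only [_root_.ext, if_pos hx, Pi.smul_apply, ← LinearIsometry.coe_pow, map_smul]
  · simp only [_root_.ext, if_neg hx, Pi.smul_apply, smul_zero]

theorem measurable_ext [MeasurableSpace H] [BorelSpace H] {f : ℝ → H} (hf : Measurable f) :
    Measurable (ext U f) := by
  have hiter : Measurable fun p : H × ℕ => (U ^ p.2) p.1 :=
    measurable_from_prod_countable_left fun n => (U ^ n).continuous.measurable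
  have hceil : Measurable fun x : ℝ => ((⌈x⌉ : ℤ) : ℝ) :=
    (measurable_of_countable _).comp Int.measurable_ceil
  have hindex : Measurable fun x : ℝ => (⌈x⌉ - 1).toNat :=
    (measurable_of_countable fun z : ℤ => (z - 1).toNat).comp Int.measurable_ceil
  refine Measurable.ite measurableSet_Ioi ?_ measurable_const
  simp only [← LinearIsometry.coe_pow]
  exact hiter.comp ((hf.comp (measurable_id.sub (hceil.sub_const 1))).prodMk hindex)

theorem integrableOn_Ioc_nat_norm_sq_ext {f : ℝ → H}
    (hf : IntegrableOn (fun x => ‖f x‖ ^ 2) (Ioc 0 1)) (n : ℕ) :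
    IntegrableOn (fun x => ‖ext U f x‖ ^ 2) (Ioc (n : ℝ) (n + 1)) := by
  have hshift := hf.comp_sub_right_Ioc (n : ℝ)
  rw [zero_add, add_comm] at hshift
  refine hshift.congr_fun (fun x hx => ?_) measurableSet_Ioc
  simp only [ext_of_mem_Ioc U f hx, LinearIsometry.norm_map]

theorem integrableOn_Ioc_zero_norm_sq_ext {f : ℝ → H}
    (hf : IntegrableOn (fun x => ‖f x‖ ^ 2) (Ioc 0 1)) (T : ℝ) :
    IntegrableOn (fun x => ‖ext U f x‖ ^ 2) (Ioc 0 T) := by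
  have hnat : IntervalIntegrable (fun x => ‖ext U f x‖ ^ 2) volume ((0 : ℕ) : ℝ) ⌈T⌉₊ :=
    IntervalIntegrable.trans_iterate fun n _ =>
      (intervalIntegrable_iff_integrableOn_Ioc_of_le (by push_cast; linarith)).2
        (by exact_mod_cast integrableOn_Ioc_nat_norm_sq_ext U hf n)
  rw [Nat.cast_zero, intervalIntegrable_iff_integrableOn_Ioc_of_le (Nat.cast_nonneg _)] at hnat
  exact hnat.mono_set (Ioc_subset_Ioc_right (Nat.le_ceil T))

theorem stable_ext [MeasurableSpace H] [BorelSpace H] {f : ℝ → H} (hf : Measurable f)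
    (hf_sq : IntegrableOn (fun x => ‖f x‖ ^ 2) (Ioc 0 1)) : Stable U (ext U f) :=
  ⟨measurable_ext U hf, fun T _ => integrableOn_Ioc_zero_norm_sq_ext U hf_sq T, 1, one_pos,
    ae_of_all _ fun _ hx => ext_add_one U f (one_pos.trans_le hx)⟩

theorem setIntegral_inner_ext (f g : ℝ → H) (n : ℕ) :
    ∫ x in Ioc (n : ℝ) (n + 1), (inner ℂ (ext U f x) (ext U g x) : ℂ) =
      ∫ x in Ioc (0 : ℝ) 1, (inner ℂ (f x) (g x) : ℂ) := by
  rw [← setIntegral_Ioc_comp_sub_right _ 0 1 (n : ℝ), zero_add, add_comm (1 : ℝ)]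
  refine setIntegral_congr_fun measurableSet_Ioc fun x hx => ?_
  simp only [ext_of_mem_Ioc U _ hx, LinearIsometry.inner_map_map]

theorem evNull_ext_iff (f : ℝ → H) :
    EvNull (ext U f) ↔ ∀ᵐ x, x ∈ Ioc (0 : ℝ) 1 → f x = 0 := by
  constructor
  · rintro ⟨l0, -, hl0⟩
    set n := ⌈l0⌉₊
    rw [← eventually_add_right_iff volume (n : ℝ)] at hl0
    filter_upwards [hl0] with x hx hx01
    have hmem : x + n ∈ Ioc (n : ℝ) (n + 1) := ⟨by linarith [hx01.1], by linarith [hx01.2]⟩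
    have hzero := hx ((Nat.le_ceil l0).trans (by linarith [hx01.1]))
    rwa [ext_of_mem_Ioc U f hmem, add_sub_cancel_right,
      map_eq_zero_iff _ (U ^ n).injective] at hzero
  · intro h
    have hshift : ∀ n : ℕ, ∀ᵐ x : ℝ, x - n ∈ Ioc (0 : ℝ) 1 → f (x - n) = 0 := fun n =>
      (eventually_sub_right_iff volume (n : ℝ)).2 h
    refine ⟨1, one_pos, ?_⟩
    filter_upwards [ae_all_iff.2 hshift] with x hx hx1
    obtain ⟨n, hn⟩ := exists_nat_mem_Ioc (one_pos.trans_le hx1)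
    rw [ext_of_mem_Ioc U f hn, hx n ⟨by linarith [hn.1], by linarith [hn.2]⟩, map_zero]

end Extension

/-- Every `f ∈ L²((0,1]; H)` extends to a stable section `f̃`, and the map
`f ↦ f̃ + N` is a linear isometry from `L²((0,1]; H)` into the quotient inner product
space `S/N`; in particular if `H ≠ 0` then `S/N ≠ 0`. -/
theorem stmt14 {H : Type*} [NormedAddCommGroup H] [InnerProductSpace ℂ H]
    [MeasurableSpace H] [BorelSpace H] (U : H →ₗᵢ[ℂ] H) :
    (∀ f : ℝ → H, Measurable f → IntegrableOn (fun lam => ‖f lam‖ ^ 2) (Ioc 0 1) →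
      Stable U (ext U f)) ∧
    (∀ f g : ℝ → H, ext U (f + g) = ext U f + ext U g) ∧
    (∀ (a : ℂ) (f : ℝ → H), ext U (a • f) = a • ext U f) ∧
    (∀ f g : ℝ → H, Measurable f → IntegrableOn (fun lam => ‖f lam‖ ^ 2) (Ioc 0 1) →
      Measurable g → IntegrableOn (fun lam => ‖g lam‖ ^ 2) (Ioc 0 1) →
      Tendsto (fun n : ℕ => ∫ lam in Ioc (n : ℝ) (n + 1),
          (inner ℂ (ext U f lam) (ext U g lam) : ℂ)) atTop
        (nhds (∫ lam in Ioc (0 : ℝ) 1, (inner ℂ (f lam) (g lam) : ℂ)))) ∧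
    (∀ f : ℝ → H, Measurable f → IntegrableOn (fun lam => ‖f lam‖ ^ 2) (Ioc 0 1) →
      (EvNull (ext U f) ↔ ∀ᵐ lam : ℝ, lam ∈ Ioc (0 : ℝ) 1 → f lam = 0)) ∧
    ((∃ x : H, x ≠ 0) →
      ∃ f : ℝ → H, Stable U f ∧ ¬ EvNull f) := by
  refine ⟨fun _ hf hf_sq => stable_ext U hf hf_sq, ext_add U, ext_smul U, fun f g _ _ _ _ => ?_,
    fun f _ _ => evNull_ext_iff U f, ?_⟩
  · simp_rw [setIntegral_inner_ext]
    exact tendsto_const_nhds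
  · rintro ⟨x, hx⟩
    refine ⟨ext U fun _ => x, stable_ext U measurable_const (integrableOn_const (by simp)), ?_⟩
    rw [evNull_ext_iff, ae_iff]
    simp [hx, Set.Ioc_def]
end
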